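/- Suppose (φ_m)_{m∈ℤ} satisfies |φ_m| ≤ c|m|^{δ-α} for m ≠ 0 with α ∈ (1,2), β = α - 1, 0 < δ < β/2, and (Δ^{(2)}_m) satisfies |Δ^{(2)}_m| ≤ c(1+|m|)^{δ-1}. Then |Σ_{m∈ℤ} m φ_m Δ^{(2)}_{n-m}| ≤ C |n|^{2δ-β} for all large |n|. -/

import Mathlib

/-!
With `a = β - δ` and `b = 1 - δ`, the hypotheses give `|m φ_m| ≲ (1 + |m|)^(-a)` and
`|Δ⁽²⁾_k| ≲ (1 + |k|)^(-b)`, where `a, b < 1 < a + b`, and `2δ - β = 1 - (a + b)`. The convolution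
`∑ₘ (1 + |m|)^(-a) (1 + |n - m|)^(-b)` is split according to which of `m`, `n - m` is at most
`|n|/2`: on `|m| ≤ |n|/2` the second factor is `≲ |n|^(-b)` and the first sums to `≲ |n|^(1-a)`;
symmetrically for `|n - m| ≤ |n|/2`; on the rest `|m|` and `|n - m|` are comparable and the tail
of `∑ |m|^(-(a+b))` beyond `|n|/2` is `≲ |n|^(1-(a+b))`. The partial sums of `i^(-s)` are
estimated by telescoping with Bernoulli's inequality.
-/

open Finset

lemma sub_one_rpow_le {p x : ℝ} (hp0 : 0 ≤ p) (hp1 : p ≤ 1) (hx : 1 ≤ x) :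
    (x - 1) ^ p ≤ x ^ p - p * x ^ (p - 1) := by
  have hx0 : 0 < x := by linarith
  have hinv : x⁻¹ ≤ 1 := inv_le_one_of_one_le₀ hx
  have bernoulli : (1 + -x⁻¹) ^ p ≤ 1 + p * -x⁻¹ :=
    rpow_one_add_le_one_add_mul_self (by linarith) hp0 hp1
  calc (x - 1) ^ p = x ^ p * (1 + -x⁻¹) ^ p := by
        rw [← Real.mul_rpow hx0.le (by linarith)]
        congr 1
        field_simp
        ring
    _ ≤ x ^ p * (1 + p * -x⁻¹) := by gcongr
    _ = x ^ p - p * x ^ (p - 1) := by rw [Real.rpow_sub_one hx0.ne']; ring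

lemma mul_rpow_neg_sub_one_le {q x : ℝ} (hq0 : 0 ≤ q) (hq1 : q ≤ 1) (hx : 1 < x) :
    q * x ^ (-q - 1) ≤ (x - 1) ^ (-q) - x ^ (-q) := by
  have hx0 : 0 < x := by linarith
  have hu : 0 < (x - 1) ^ q := Real.rpow_pos_of_pos (by linarith) q
  have hv : 0 < x ^ q := Real.rpow_pos_of_pos hx0 q
  have huv : (x - 1) ^ q ≤ x ^ q := Real.rpow_le_rpow (by linarith) (by linarith) hq0
  have hgap := sub_one_rpow_le hq0 hq1 hx.le
  rw [Real.rpow_neg (by linarith), Real.rpow_neg hx0.le, inv_sub_inv hu.ne' hv.ne',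
    le_div_iff₀ (by positivity)]
  calc q * x ^ (-q - 1) * ((x - 1) ^ q * x ^ q)
      ≤ q * x ^ (-q - 1) * (x ^ q * x ^ q) := by gcongr
    _ = q * x ^ (q - 1) := by
        rw [← Real.rpow_add hx0, mul_assoc, ← Real.rpow_add hx0]; ring_nf
    _ ≤ x ^ q - (x - 1) ^ q := by linarith

lemma sum_range_one_add_rpow_neg_le {s : ℝ} (hs0 : 0 ≤ s) (hs1 : s < 1) (K : ℕ) :
    ∑ i ∈ range K, (1 + (i : ℝ)) ^ (-s) ≤ (K : ℝ) ^ (1 - s) / (1 - s) := by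
  have h1s : 0 < 1 - s := by linarith
  set F : ℕ → ℝ := fun i => (i : ℝ) ^ (1 - s) / (1 - s)
  calc ∑ i ∈ range K, (1 + (i : ℝ)) ^ (-s) ≤ ∑ i ∈ range K, (F (i + 1) - F i) := by
        gcongr with i
        have step := sub_one_rpow_le h1s.le (by linarith) (x := i + 1) (by simp)
        rw [add_sub_cancel_right, sub_sub_cancel_left] at step
        simp only [F, Nat.cast_succ]
        rw [← sub_div, le_div_iff₀ h1s, add_comm]
        linarith
    _ = (K : ℝ) ^ (1 - s) / (1 - s) := by
        rw [sum_range_sub]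
        simp [F, Real.zero_rpow h1s.ne']

lemma sum_range_add_rpow_neg_sub_one_le {q M : ℝ} (hq0 : 0 < q) (hq1 : q ≤ 1) (hM : 0 < M) (K : ℕ) :
    ∑ i ∈ range K, (M + 1 + i) ^ (-q - 1) ≤ M ^ (-q) / q := by
  calc ∑ i ∈ range K, (M + 1 + i) ^ (-q - 1)
      ≤ ∑ i ∈ range K, ((M + i) ^ (-q) / q - (M + (i + 1 : ℕ)) ^ (-q) / q) := by
        gcongr with i
        rw [← sub_div, le_div_iff₀ hq0, mul_comm]
        have step := mul_rpow_neg_sub_one_le hq0.le hq1 (x := M + 1 + i)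
          (by linarith [Nat.cast_nonneg (α := ℝ) i])
        rw [show M + 1 + (i : ℝ) - 1 = M + i by ring] at step
        rw [show M + ((i + 1 : ℕ) : ℝ) = M + 1 + i by push_cast; ring]
        exact step
    _ = M ^ (-q) / q - (M + K) ^ (-q) / q := by
        rw [sum_range_sub' (fun i : ℕ => (M + i) ^ (-q) / q)]
        simp
    _ ≤ M ^ (-q) / q := by
        have : 0 ≤ (M + K) ^ (-q) / q := by positivity
        linarith

lemma summable_indicator_Iic (N : ℕ) (w : ℕ → ℝ) : Summable ((Set.Iic N).indicator w) :=
  summable_of_ne_finset_zero (s := range (N + 1)) fun i hi =>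
    Set.indicator_of_notMem (by simpa [Nat.lt_succ_iff] using hi) w

lemma tsum_indicator_Iic_rpow_le {s : ℝ} (hs0 : 0 ≤ s) (hs1 : s < 1) (N : ℕ) :
    ∑' i, (Set.Iic N).indicator (fun i : ℕ => (1 + (i : ℝ)) ^ (-s)) i
      ≤ (1 + (N : ℝ)) ^ (1 - s) / (1 - s) := by
  rw [tsum_eq_sum (s := range (N + 1)) fun i hi =>
    Set.indicator_of_notMem (by simpa [Nat.lt_succ_iff] using hi) _]
  calc ∑ i ∈ range (N + 1), (Set.Iic N).indicator (fun i : ℕ => (1 + (i : ℝ)) ^ (-s)) i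
      = ∑ i ∈ range (N + 1), (1 + (i : ℝ)) ^ (-s) :=
        sum_congr rfl fun i hi => Set.indicator_of_mem (by simpa [Nat.lt_succ_iff] using hi) _
    _ ≤ (1 + (N : ℝ)) ^ (1 - s) / (1 - s) := by
        simpa [add_comm (N : ℝ) 1] using sum_range_one_add_rpow_neg_le hs0 hs1 (N + 1)

lemma summable_indicator_Ioi_rpow {s : ℝ} (hs : 1 < s) (N : ℕ) :
    Summable ((Set.Ioi N).indicator fun i : ℕ => (1 + (i : ℝ)) ^ (-s)) := by
  refine Summable.indicator ?_ _
  have := (summable_nat_add_iff 1).mpr (Real.summable_nat_rpow.mpr (by linarith : -s < -1))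
  simpa [add_comm] using this

lemma tsum_indicator_Ioi_rpow_le {s : ℝ} (hs1 : 1 < s) (hs2 : s ≤ 2) (N : ℕ) :
    ∑' i, (Set.Ioi N).indicator (fun i : ℕ => (1 + (i : ℝ)) ^ (-s)) i
      ≤ (1 + (N : ℝ)) ^ (1 - s) / (s - 1) := by
  rw [← (summable_indicator_Ioi_rpow hs1 N).sum_add_tsum_nat_add (N + 1),
    sum_eq_zero fun i hi => Set.indicator_of_notMem (by simpa [Nat.lt_succ_iff] using hi) _,
    zero_add]
  refine Real.tsum_le_of_sum_range_le (fun i => Set.indicator_nonneg (fun _ _ => by positivity) _)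
    fun K => ?_
  calc ∑ i ∈ range K, (Set.Ioi N).indicator (fun i : ℕ => (1 + (i : ℝ)) ^ (-s)) (i + (N + 1))
      = ∑ i ∈ range K, ((1 + N : ℝ) + 1 + i) ^ (-(s - 1) - 1) :=
        sum_congr rfl fun i _ => by
          rw [Set.indicator_of_mem (Set.mem_Ioi.mpr (by omega)), neg_sub, sub_sub_cancel_left]
          push_cast
          congr 1
          ring
    _ ≤ (1 + (N : ℝ)) ^ (-(s - 1)) / (s - 1) :=
        sum_range_add_rpow_neg_sub_one_le (by linarith) (by linarith) (by positivity) K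
    _ = (1 + (N : ℝ)) ^ (1 - s) / (s - 1) := by rw [neg_sub]

lemma HasSum.int_natAbs {G : Type*} [AddCommGroup G] [TopologicalSpace G] [IsTopologicalAddGroup G]
    {F : ℕ → G} {s : G} (h : HasSum F s) : HasSum (fun m : ℤ => F m.natAbs) (s + s - F 0) := by
  simpa using
    HasSum.of_nat_of_neg (f := fun m : ℤ => F m.natAbs) (by simpa using h) (by simpa using h)

lemma tsum_natAbs_le_two_mul {F : ℕ → ℝ} (hF : Summable F) (h0 : 0 ≤ F 0) :
    ∑' m : ℤ, F m.natAbs ≤ 2 * ∑' i, F i := by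
  rw [hF.hasSum.int_natAbs.tsum_eq]
  linarith

lemma rpow_mul_rpow_le_split {a b : ℝ} (ha : 0 ≤ a) (hb : 0 ≤ b) {i j L : ℕ}
    (hL : L ≤ i + j) (hi : i ≤ L + j) :
    (1 + (i : ℝ)) ^ (-a) * (1 + (j : ℝ)) ^ (-b) ≤
      (1 + ((L / 2 : ℕ) : ℝ)) ^ (-b) *
          (Set.Iic (L / 2)).indicator (fun i : ℕ => (1 + (i : ℝ)) ^ (-a)) i
        + (1 + ((L / 2 : ℕ) : ℝ)) ^ (-a) *
          (Set.Iic (L / 2)).indicator (fun j : ℕ => (1 + (j : ℝ)) ^ (-b)) j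
        + 3 ^ b * (Set.Ioi (L / 2)).indicator (fun i : ℕ => (1 + (i : ℝ)) ^ (-(a + b))) i := by
  set N := L / 2
  have antitone_of_le {s : ℝ} (hs : 0 ≤ s) {k l : ℕ} (hkl : k ≤ l) :
      (1 + (l : ℝ)) ^ (-s) ≤ (1 + (k : ℝ)) ^ (-s) :=
    Real.rpow_le_rpow_of_nonpos (by positivity) (by gcongr) (by linarith)
  have hA : 0 ≤ (1 + (N : ℝ)) ^ (-b) *
      (Set.Iic N).indicator (fun i : ℕ => (1 + (i : ℝ)) ^ (-a)) i :=
    mul_nonneg (by positivity) (Set.indicator_nonneg (fun _ _ => by positivity) _)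
  have hB : 0 ≤ (1 + (N : ℝ)) ^ (-a) *
      (Set.Iic N).indicator (fun j : ℕ => (1 + (j : ℝ)) ^ (-b)) j :=
    mul_nonneg (by positivity) (Set.indicator_nonneg (fun _ _ => by positivity) _)
  have hT : 0 ≤ 3 ^ b * (Set.Ioi N).indicator (fun i : ℕ => (1 + (i : ℝ)) ^ (-(a + b))) i :=
    mul_nonneg (by positivity) (Set.indicator_nonneg (fun _ _ => by positivity) _)
  by_cases hiN : i ≤ N
  · rw [Set.indicator_of_mem (Set.mem_Iic.mpr hiN), mul_comm _ ((1 + (i : ℝ)) ^ (-a))]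
    have : (1 + (j : ℝ)) ^ (-b) ≤ (1 + (N : ℝ)) ^ (-b) := antitone_of_le hb (by omega)
    have := mul_le_mul_of_nonneg_left this (by positivity : 0 ≤ (1 + (i : ℝ)) ^ (-a))
    linarith
  by_cases hjN : j ≤ N
  · rw [Set.indicator_of_mem (Set.mem_Iic.mpr hjN) (fun j : ℕ => (1 + (j : ℝ)) ^ (-b))]
    have : (1 + (i : ℝ)) ^ (-a) ≤ (1 + (N : ℝ)) ^ (-a) := antitone_of_le ha (by omega)
    have := mul_le_mul_of_nonneg_right this (by positivity : 0 ≤ (1 + (j : ℝ)) ^ (-b))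
    linarith
  have hij : (1 + (i : ℝ)) / 3 ≤ 1 + (j : ℝ) := by
    rw [div_le_iff₀ (by norm_num)]
    -- `i ≤ L + j ≤ 2N + 1 + j` and `N < j`
    exact_mod_cast (by omega : 1 + i ≤ (1 + j) * 3)
  rw [Set.indicator_of_mem (Set.mem_Ioi.mpr (by omega))]
  calc (1 + (i : ℝ)) ^ (-a) * (1 + (j : ℝ)) ^ (-b)
      ≤ (1 + (i : ℝ)) ^ (-a) * ((1 + (i : ℝ)) / 3) ^ (-b) := by
        gcongr _ * ?_
        exact Real.rpow_le_rpow_of_nonpos (by positivity) hij (by linarith)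
    _ = 3 ^ b * (1 + (i : ℝ)) ^ (-(a + b)) := by
        rw [Real.div_rpow (by positivity) (by norm_num), Real.rpow_neg (by norm_num : (0:ℝ) ≤ 3),
          div_inv_eq_mul, neg_add, Real.rpow_add (by positivity)]
        ring
    _ ≤ _ := by linarith

lemma one_add_natAbs_div_two_rpow_le {e : ℝ} (he : e ≤ 0) (n : ℤ) :
    (1 + ((n.natAbs / 2 : ℕ) : ℝ)) ^ e ≤ 2 ^ (-e) * (1 + |(n : ℝ)|) ^ e := by
  have hhalf : (1 + |(n : ℝ)|) / 2 ≤ 1 + ((n.natAbs / 2 : ℕ) : ℝ) := by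
    have h : ((1 + n.natAbs : ℕ) : ℝ) ≤ ((1 + n.natAbs / 2) * 2 : ℕ) := by exact_mod_cast (by omega)
    push_cast [Nat.cast_natAbs, Int.cast_abs] at h
    linarith
  calc _ ≤ ((1 + |(n : ℝ)|) / 2) ^ e := Real.rpow_le_rpow_of_nonpos (by positivity) hhalf he
    _ = 2 ^ (-e) * (1 + |(n : ℝ)|) ^ e := by
        rw [Real.div_rpow (by positivity) zero_le_two, Real.rpow_neg zero_le_two, div_eq_inv_mul]

lemma summable_and_tsum_le_of_le_natAbs {f : ℤ → ℝ} {F G H : ℕ → ℝ} {x y z : ℝ} {n : ℤ}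
    (hF : Summable F) (hG : Summable G) (hH : Summable H) (hf0 : ∀ m, 0 ≤ f m)
    (hle : ∀ m, f m ≤ x * F m.natAbs + y * G (n - m).natAbs + z * H m.natAbs) :
    Summable f ∧ ∑' m, f m ≤
      x * ∑' m : ℤ, F m.natAbs + y * ∑' m : ℤ, G m.natAbs + z * ∑' m : ℤ, H m.natAbs := by
  have hFx := hF.hasSum.int_natAbs.summable.mul_left x
  have hHz := hH.hasSum.int_natAbs.summable.mul_left z
  have hGy : Summable fun m : ℤ => y * G (n - m).natAbs :=
    (((Equiv.subLeft n).summable_iff (f := fun m : ℤ => G m.natAbs)).mpr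
      hG.hasSum.int_natAbs.summable).mul_left y
  have hG_shift : ∑' m : ℤ, G (n - m).natAbs = ∑' m : ℤ, G m.natAbs :=
    (Equiv.subLeft n).tsum_eq fun m : ℤ => G m.natAbs
  have hg := (hFx.add hGy).add hHz
  have hf := Summable.of_nonneg_of_le hf0 hle hg
  refine ⟨hf, (hf.tsum_le_tsum hle hg).trans_eq ?_⟩
  rw [(hFx.add hGy).tsum_add hHz, hFx.tsum_add hGy, tsum_mul_left, tsum_mul_left, tsum_mul_left,
    hG_shift]

lemma summable_and_tsum_rpow_mul_rpow_sub_le {a b : ℝ} (ha : a < 1) (hb : b < 1)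
    (hab : 1 < a + b) (n : ℤ) :
    Summable (fun m : ℤ => (1 + |(m : ℝ)|) ^ (-a) * (1 + |((n - m : ℤ) : ℝ)|) ^ (-b)) ∧
      ∑' m : ℤ, (1 + |(m : ℝ)|) ^ (-a) * (1 + |((n - m : ℤ) : ℝ)|) ^ (-b)
        ≤ 2 * (1 / (1 - a) + 1 / (1 - b) + 3 ^ b / (a + b - 1))
          * (1 + ((n.natAbs / 2 : ℕ) : ℝ)) ^ (1 - (a + b)) := by
  have ha0 : 0 ≤ a := by linarith
  have hb0 : 0 ≤ b := by linarith
  set N := n.natAbs / 2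
  set M : ℝ := 1 + (N : ℝ)
  have hM : 0 < M := by positivity
  set A := (Set.Iic N).indicator fun i : ℕ => (1 + (i : ℝ)) ^ (-a)
  set B := (Set.Iic N).indicator fun i : ℕ => (1 + (i : ℝ)) ^ (-b)
  set T := (Set.Ioi N).indicator fun i : ℕ => (1 + (i : ℝ)) ^ (-(a + b))
  have hsplit (m : ℤ) : (1 + |(m : ℝ)|) ^ (-a) * (1 + |((n - m : ℤ) : ℝ)|) ^ (-b) ≤
      M ^ (-b) * A m.natAbs + M ^ (-a) * B (n - m).natAbs + 3 ^ b * T m.natAbs := by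
    simpa only [Nat.cast_natAbs, Int.cast_abs] using rpow_mul_rpow_le_split ha0 hb0
      (i := m.natAbs) (j := (n - m).natAbs) (L := n.natAbs) (by omega) (by omega)
  obtain ⟨hf, hle⟩ := summable_and_tsum_le_of_le_natAbs (summable_indicator_Iic N _)
    (summable_indicator_Iic N _) (summable_indicator_Ioi_rpow hab N) (fun m => by positivity)
    hsplit
  refine ⟨hf, hle.trans ?_⟩
  have hA : ∑' m : ℤ, A m.natAbs ≤ 2 * (M ^ (1 - a) / (1 - a)) :=
    (tsum_natAbs_le_two_mul (summable_indicator_Iic N _)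
      (Set.indicator_nonneg (fun _ _ => by positivity) _)).trans
      (by gcongr; exact tsum_indicator_Iic_rpow_le ha0 ha N)
  have hB : ∑' m : ℤ, B m.natAbs ≤ 2 * (M ^ (1 - b) / (1 - b)) :=
    (tsum_natAbs_le_two_mul (summable_indicator_Iic N _)
      (Set.indicator_nonneg (fun _ _ => by positivity) _)).trans
      (by gcongr; exact tsum_indicator_Iic_rpow_le hb0 hb N)
  have hT : ∑' m : ℤ, T m.natAbs ≤ 2 * (M ^ (1 - (a + b)) / (a + b - 1)) :=
    (tsum_natAbs_le_two_mul (summable_indicator_Ioi_rpow hab N)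
      (Set.indicator_nonneg (fun _ _ => by positivity) _)).trans
      (by gcongr; exact tsum_indicator_Ioi_rpow_le hab (by linarith) N)
  have e₁ : M ^ (-b) * M ^ (1 - a) = M ^ (1 - (a + b)) := by rw [← Real.rpow_add hM]; ring_nf
  have e₂ : M ^ (-a) * M ^ (1 - b) = M ^ (1 - (a + b)) := by rw [← Real.rpow_add hM]; ring_nf
  calc M ^ (-b) * ∑' m : ℤ, A m.natAbs + M ^ (-a) * ∑' m : ℤ, B m.natAbs
        + 3 ^ b * ∑' m : ℤ, T m.natAbs
      ≤ M ^ (-b) * (2 * (M ^ (1 - a) / (1 - a))) + M ^ (-a) * (2 * (M ^ (1 - b) / (1 - b)))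
          + 3 ^ b * (2 * (M ^ (1 - (a + b)) / (a + b - 1))) := by gcongr
    _ = 2 * (1 / (1 - a) + 1 / (1 - b) + 3 ^ b / (a + b - 1)) * M ^ (1 - (a + b)) := by
        linear_combination (2 / (1 - a)) * e₁ + (2 / (1 - b)) * e₂

lemma abs_intCast_mul_le_of_abs_le_rpow {φ : ℤ → ℝ} {c a : ℝ} (hc : 0 ≤ c) (ha : 0 ≤ a)
    (hφ : ∀ m : ℤ, m ≠ 0 → |φ m| ≤ c * |(m : ℝ)| ^ (-a - 1)) (m : ℤ) :
    |(m : ℝ) * φ m| ≤ 2 ^ a * c * (1 + |(m : ℝ)|) ^ (-a) := by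
  rcases eq_or_ne m 0 with rfl | hm
  · simp only [Int.cast_zero, zero_mul, abs_zero]
    positivity
  have hm1 : (1 : ℝ) ≤ |(m : ℝ)| := by exact_mod_cast Int.one_le_abs hm
  have hm0 : (0 : ℝ) < |(m : ℝ)| := by linarith
  calc |(m : ℝ) * φ m| ≤ |(m : ℝ)| * (c * |(m : ℝ)| ^ (-a - 1)) := by
        rw [abs_mul]; gcongr; exact hφ m hm
    _ = c * |(m : ℝ)| ^ (-a) := by
        rw [Real.rpow_sub_one hm0.ne']; field_simp
    _ ≤ c * ((1 + |(m : ℝ)|) / 2) ^ (-a) := by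
        gcongr c * ?_
        exact Real.rpow_le_rpow_of_nonpos (by positivity) (by linarith) (by linarith)
    _ = 2 ^ a * c * (1 + |(m : ℝ)|) ^ (-a) := by
        rw [Real.div_rpow (by positivity) zero_le_two, Real.rpow_neg zero_le_two]
        field_simp

theorem exists_abs_tsum_mul_sub_le {a b : ℝ} (ha : a < 1) (hb : b < 1) (hab : 1 < a + b) :
    ∃ C, 0 ≤ C ∧ ∀ (u v : ℤ → ℝ) (c₁ c₂ : ℝ),
      (∀ m : ℤ, |u m| ≤ c₁ * (1 + |(m : ℝ)|) ^ (-a)) →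
      (∀ k : ℤ, |v k| ≤ c₂ * (1 + |(k : ℝ)|) ^ (-b)) → ∀ n : ℤ,
        |∑' m : ℤ, u m * v (n - m)| ≤ c₁ * c₂ * C * (1 + |(n : ℝ)|) ^ (1 - (a + b)) := by
  set K := 1 / (1 - a) + 1 / (1 - b) + 3 ^ b / (a + b - 1)
  have hK : 0 ≤ K := add_nonneg (add_nonneg (one_div_nonneg.mpr (by linarith))
    (one_div_nonneg.mpr (by linarith))) (div_nonneg (by positivity) (by linarith))
  refine ⟨2 * K * 2 ^ (-(1 - (a + b))), by positivity, fun u v c₁ c₂ hu hv n => ?_⟩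
  have hc₁ : 0 ≤ c₁ := by simpa using (abs_nonneg _).trans (hu 0)
  have hc₂ : 0 ≤ c₂ := by simpa using (abs_nonneg _).trans (hv 0)
  obtain ⟨hsum, hbound⟩ := summable_and_tsum_rpow_mul_rpow_sub_le ha hb hab n
  calc |∑' m : ℤ, u m * v (n - m)|
      ≤ ∑' m : ℤ, c₁ * c₂ * ((1 + |(m : ℝ)|) ^ (-a) * (1 + |((n - m : ℤ) : ℝ)|) ^ (-b)) :=
        tsum_of_norm_bounded (hsum.mul_left (c₁ * c₂)).hasSum fun m => by
          rw [Real.norm_eq_abs, abs_mul]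
          exact (mul_le_mul (hu m) (hv (n - m)) (abs_nonneg _) (by positivity)).trans_eq (by ring)
    _ ≤ c₁ * c₂ * (2 * K * (1 + ((n.natAbs / 2 : ℕ) : ℝ)) ^ (1 - (a + b))) := by
        rw [tsum_mul_left]
        gcongr
    _ ≤ c₁ * c₂ * (2 * K * (2 ^ (-(1 - (a + b))) * (1 + |(n : ℝ)|) ^ (1 - (a + b)))) := by
        gcongr
        exact one_add_natAbs_div_two_rpow_le (by linarith) n
    _ = c₁ * c₂ * (2 * K * 2 ^ (-(1 - (a + b)))) * (1 + |(n : ℝ)|) ^ (1 - (a + b)) := by ring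

theorem key_convolution_estimate_general
    (α β δ : ℝ) (hα2 : α < 2) (hβ : β = α - 1)
    (hδ0 : 0 < δ) (hδ : δ < β / 2)
    (φ : ℤ → ℝ) (c : ℝ)
    (hφ : ∀ m : ℤ, m ≠ 0 → |φ m| ≤ c * Real.rpow |(m : ℝ)| (δ - α))
    (Δ2 : ℤ → ℝ)
    (hΔ2 : ∀ m : ℤ, |Δ2 m| ≤ c * Real.rpow (1 + |(m : ℝ)|) (δ - 1)) :
    ∃ C : ℝ, ∃ N : ℕ, ∀ n : ℤ, (N : ℝ) ≤ |(n : ℝ)| →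
      |∑' m : ℤ, (m : ℝ) * φ m * Δ2 (n - m)| ≤ C * Real.rpow |(n : ℝ)| (2 * δ - β) := by
  simp only [Real.rpow_eq_pow] at hφ hΔ2 ⊢
  set a := β - δ with ha
  set b := 1 - δ with hb
  have hc : 0 ≤ c := by simpa using (abs_nonneg _).trans (hΔ2 0)
  have hmφ := abs_intCast_mul_le_of_abs_le_rpow hc (by linarith) (a := a) fun m hm => by
    simpa only [show -a - 1 = δ - α by rw [ha, hβ]; ring] using hφ m hm
  have hΔ2' (k : ℤ) : |Δ2 k| ≤ c * (1 + |(k : ℝ)|) ^ (-b) := by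
    simpa only [show δ - 1 = -b by rw [hb]; ring] using hΔ2 k
  obtain ⟨C, hC, hconv⟩ := exists_abs_tsum_mul_sub_le (a := a) (b := b)
    (by linarith) (by linarith) (by linarith)
  refine ⟨2 ^ a * c * c * C, 1, fun n hn => ?_⟩
  have hn0 : 0 < |(n : ℝ)| := by push_cast at hn; linarith
  calc |∑' m : ℤ, (m : ℝ) * φ m * Δ2 (n - m)|
      ≤ 2 ^ a * c * c * C * (1 + |(n : ℝ)|) ^ (1 - (a + b)) := hconv _ _ _ _ hmφ hΔ2' n
    _ ≤ 2 ^ a * c * c * C * |(n : ℝ)| ^ (2 * δ - β) := by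
        rw [show 1 - (a + b) = 2 * δ - β by rw [ha, hb]; ring]
        gcongr _ * ?_
        exact Real.rpow_le_rpow_of_nonpos hn0 (by linarith) (by linarith)

theorem key_convolution_estimate
    (α β δ : ℝ) (hα1 : 1 < α) (hα2 : α < 2) (hβ : β = α - 1)
    (hδ0 : 0 < δ) (hδ : δ < β / 2)
    (φ : ℤ → ℝ) (c : ℝ)
    (hφ : ∀ m : ℤ, m ≠ 0 → |φ m| ≤ c * Real.rpow |(m : ℝ)| (δ - α))
    (Δ2 : ℤ → ℝ)
    (hΔ2 : ∀ m : ℤ, |Δ2 m| ≤ c * Real.rpow (1 + |(m : ℝ)|) (δ - 1)) :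
    ∃ C : ℝ, ∃ N : ℕ, ∀ n : ℤ, (N : ℝ) ≤ |(n : ℝ)| →
      |∑' m : ℤ, (m : ℝ) * φ m * Δ2 (n - m)| ≤ C * Real.rpow |(n : ℝ)| (2 * δ - β) :=
  key_convolution_estimate_general α β δ hα2 hβ hδ0 hδ φ c hφ Δ2 hΔ2
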